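/- Let G be a hypergraph on a finite set V and let ∼, ∼' be equivalence relations on V with ∼ ≤ ∼'. Then (∼' ∈ E_∩[G] and ∼̄ ∈ E_∩[G/∼']) if and only if (∼ ∈ E_∩[G] and ∼' ∈ E_∩[G|_∩∼]); moreover, when these conditions hold, the hypergraphs (G/∼')|_∩∼̄ and (G|_∩∼)/∼' are equal. -/

import Mathlib

/-- One step in a path of a hypergraph with edge set `E`: `x` and `y` belong to a common edge. -/
def hstep {α : Type*} (E : Set (Set α)) (x y : α) : Prop := ∃ e ∈ E, x ∈ e ∧ y ∈ e

/-- There is a path from `x` to `y` in the hypergraph with edge set `E`. -/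
def hreach {α : Type*} (E : Set (Set α)) : α → α → Prop := Relation.ReflTransGen (hstep E)

/-- The hypergraph with edge set `E` and vertex set `S` is connected. -/
def connOn {α : Type*} (E : Set (Set α)) (S : Set α) : Prop := ∀ x ∈ S, ∀ y ∈ S, hreach E x y

/-- Edge set of `G|_⊂I`. -/
def subEdges {α : Type*} (E : Set (Set α)) (I : Set α) : Set (Set α) := {e ∈ E | e ⊆ I}

/-- Edge set of `G|_∩I`. -/
def capEdges {α : Type*} (E : Set (Set α)) (I : Set α) : Set (Set α) := {f | ∃ e ∈ E, f = e ∩ I}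

/-- The class of `x` for the relation `r`. -/
def classOf {α : Type*} (r : α → α → Prop) (x : α) : Set α := {y | r x y}

/-- Edge set of `G|_⊂∼`: union over the classes `C` of `∼` of the edge sets of `G|_⊂C`. -/
def subRelEdges {α : Type*} (E : Set (Set α)) (r : α → α → Prop) : Set (Set α) :=
  {e | ∃ x, e ∈ E ∧ e ⊆ classOf r x}

/-- Edge set of `G|_∩∼`: union over the classes `C` of `∼` of the edge sets of `G|_∩C`. -/
def capRelEdges {α : Type*} (E : Set (Set α)) (r : α → α → Prop) : Set (Set α) :=
  {f | ∃ x, ∃ e ∈ E, f = e ∩ classOf r x}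

/-- `∼ ∈ E_⊂[G]`: every class of `r` induces a connected `⊂`-sub-hypergraph. -/
def esubCond {α : Type*} (E : Set (Set α)) (r : α → α → Prop) : Prop :=
  ∀ x, connOn (subEdges E (classOf r x)) (classOf r x)

/-- `∼ ∈ E_∩[G]`: every class of `r` induces a connected `∩`-sub-hypergraph. -/
def ecapCond {α : Type*} (E : Set (Set α)) (r : α → α → Prop) : Prop :=
  ∀ x, connOn (capEdges E (classOf r x)) (classOf r x)

/-- Edge set of the contracted hypergraph `G/∼`. -/
def quotEdges {α : Type*} (s : Setoid α) (E : Set (Set α)) : Set (Set (Quotient s)) :=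
  {f | ∃ e ∈ E, f = Quotient.mk s '' e}

lemma hreach_mono' {α : Type*} {E₁ E₂ : Set (Set α)}
    (h : ∀ e ∈ E₁, ∃ e', e' ∈ E₂ ∧ e ⊆ e') {x y : α} (hx : hreach E₁ x y) :
    hreach E₂ x y :=
  Relation.ReflTransGen.mono (fun a b hab => by
    obtain ⟨e, he, ha, hb⟩ := hab
    obtain ⟨e', he', hss⟩ := h e he
    exact ⟨e', he', hss ha, hss hb⟩) _ _ hx

section main
variable {V : Type*} {E : Set (Set V)} {s' : Setoid V} {r : V → V → Prop}

lemma classOf_rbar (hr : Equivalence r) (hle : ∀ x y : V, s'.r x y → r x y) (x : V) :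
    classOf (fun a b => ∃ p q : V, a = Quotient.mk s' p ∧ b = Quotient.mk s' q ∧ r p q)
      (Quotient.mk s' x) = Quotient.mk s' '' classOf r x := by
  ext b
  constructor
  · rintro ⟨p, q, hp, hq, hpq⟩
    exact ⟨q, hr.trans (hle _ _ (Quotient.exact hp)) hpq, hq.symm⟩
  · rintro ⟨q, hq, hb⟩
    exact ⟨x, q, rfl, hb.symm, hq⟩

lemma image_inter_class (hr : Equivalence r) (hle : ∀ x y : V, s'.r x y → r x y)
    (e : Set V) (x : V) :
    Quotient.mk s' '' e ∩ Quotient.mk s' '' classOf r x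
      = Quotient.mk s' '' (e ∩ classOf r x) := by
  ext b
  constructor
  · rintro ⟨⟨u, hu, hub⟩, ⟨w, hw, hwb⟩⟩
    have huw : s'.r u w := Quotient.exact (hub.trans hwb.symm)
    exact ⟨u, ⟨hu, hr.trans hw (hr.symm (hle _ _ huw))⟩, hub⟩
  · rintro ⟨u, ⟨hu, hux⟩, hub⟩
    exact ⟨⟨u, hu, hub⟩, ⟨u, hux, hub⟩⟩

lemma reach_in_class (hr : Equivalence r) (hle : ∀ x y : V, s'.r x y → r x y)
    (h1 : ecapCond E s'.r) {x p q : V} (hp : p ∈ classOf r x)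
    (hpq : s'.r p q) : hreach (capEdges E (classOf r x)) p q := by
  have hsub : classOf s'.r p ⊆ classOf r x := fun w hw => hr.trans hp (hle _ _ hw)
  have := h1 p p (s'.refl p) q hpq
  refine hreach_mono' ?_ this
  rintro f ⟨e, he, rfl⟩
  exact ⟨e ∩ classOf r x, ⟨e, he, rfl⟩, Set.inter_subset_inter_right e hsub⟩

lemma descend (hr : Equivalence r) (hle : ∀ x y : V, s'.r x y → r x y)
    (h1 : ecapCond E s'.r) (x : V) {a b : Quotient s'}
    (hab : hreach (capEdges (quotEdges s' E)
        (classOf (fun a b => ∃ p q : V, a = Quotient.mk s' p ∧ b = Quotient.mk s' q ∧ r p q)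
          (Quotient.mk s' x))) a b) :
    ∀ p q : V, p ∈ classOf r x → q ∈ classOf r x →
      Quotient.mk s' p = a → Quotient.mk s' q = b → hreach (capEdges E (classOf r x)) p q := by
  induction hab with
  | refl =>
    intro p q hp hq hpa hqb
    exact reach_in_class hr hle h1 hp (Quotient.exact (hpa.trans hqb.symm))
  | tail hab hst ih =>
    intro p q hp hq hpa hqc
    obtain ⟨f, hf, hbf, hcf⟩ := hst
    obtain ⟨g, ⟨e, he, rfl⟩, rfl⟩ := hf
    rw [classOf_rbar hr hle x, image_inter_class hr hle e x] at hbf hcf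
    obtain ⟨u', ⟨hu'e, hu'x⟩, hu'⟩ := hbf
    obtain ⟨v', ⟨hv'e, hv'x⟩, hv'⟩ := hcf
    have hpu := ih p u' hp hu'x hpa hu'
    have hst' : hstep (capEdges E (classOf r x)) u' v' :=
      ⟨e ∩ classOf r x, ⟨e, he, rfl⟩, ⟨hu'e, hu'x⟩, ⟨hv'e, hv'x⟩⟩
    have hvq := reach_in_class hr hle h1 hv'x (Quotient.exact (hv'.trans hqc.symm))
    exact (hpu.tail hst').trans hvq

lemma ascend (hr : Equivalence r) (hle : ∀ x y : V, s'.r x y → r x y)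
    {x p q : V} (h : hreach (capEdges E (classOf r x)) p q) :
    hreach (capEdges (quotEdges s' E)
        (classOf (fun a b => ∃ p q : V, a = Quotient.mk s' p ∧ b = Quotient.mk s' q ∧ r p q)
          (Quotient.mk s' x))) (Quotient.mk s' p) (Quotient.mk s' q) := by
  refine Relation.ReflTransGen.lift (Quotient.mk s') (fun a b hab => ?_) _ _ h
  obtain ⟨f, ⟨e, he, rfl⟩, ha, hb⟩ := hab
  refine ⟨Quotient.mk s' '' e ∩ classOf _ (Quotient.mk s' x),
    ⟨Quotient.mk s' '' e, ⟨e, he, rfl⟩, rfl⟩, ?_, ?_⟩ <;>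
  · rw [classOf_rbar hr hle x, image_inter_class hr hle e x]
    exact ⟨_, by assumption, rfl⟩

end main

theorem stmt7 {V : Type*} [Fintype V] (E : Set (Set V))
    (hE0 : ∅ ∈ E) (hE1 : ∀ x : V, {x} ∈ E)
    (s' : Setoid V) (r : V → V → Prop) (hr : Equivalence r)
    (hle : ∀ x y : V, s'.r x y → r x y) :
    ((ecapCond E s'.r ∧
        ecapCond (quotEdges s' E)
          (fun a b => ∃ x y : V, a = Quotient.mk s' x ∧ b = Quotient.mk s' y ∧ r x y)) ↔
      (ecapCond E r ∧ ecapCond (capRelEdges E r) s'.r)) ∧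
    ((ecapCond E s'.r ∧
        ecapCond (quotEdges s' E)
          (fun a b => ∃ x y : V, a = Quotient.mk s' x ∧ b = Quotient.mk s' y ∧ r x y)) →
      capRelEdges (quotEdges s' E)
          (fun a b => ∃ x y : V, a = Quotient.mk s' x ∧ b = Quotient.mk s' y ∧ r x y) =
        quotEdges s' (capRelEdges E r)) := by
  have hDC : ∀ x : V, classOf s'.r x ⊆ classOf r x := fun x w hw => hle _ _ hw
  constructor
  · constructor
    · rintro ⟨h1, h2⟩
      constructor
      · -- ecapCond E r
        intro x u hu v hv
        have hu' : Quotient.mk s' u ∈ classOf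
            (fun a b => ∃ p q : V, a = Quotient.mk s' p ∧ b = Quotient.mk s' q ∧ r p q)
            (Quotient.mk s' x) := by
          rw [classOf_rbar hr hle x]; exact ⟨u, hu, rfl⟩
        have hv' : Quotient.mk s' v ∈ classOf
            (fun a b => ∃ p q : V, a = Quotient.mk s' p ∧ b = Quotient.mk s' q ∧ r p q)
            (Quotient.mk s' x) := by
          rw [classOf_rbar hr hle x]; exact ⟨v, hv, rfl⟩
        exact descend hr hle h1 x (h2 (Quotient.mk s' x) _ hu' _ hv') u v hu hv rfl rfl
      · -- ecapCond (capRelEdges E r) s'.r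
        intro x u hu v hv
        refine hreach_mono' ?_ (h1 x u hu v hv)
        rintro f ⟨e, he, rfl⟩
        refine ⟨(e ∩ classOf r x) ∩ classOf s'.r x, ⟨e ∩ classOf r x, ⟨x, e, he, rfl⟩, rfl⟩, ?_⟩
        intro w hw
        exact ⟨⟨hw.1, hDC x hw.2⟩, hw.2⟩
    · rintro ⟨h3, h4⟩
      constructor
      · -- ecapCond E s'.r
        intro x u hu v hv
        refine hreach_mono' ?_ (h4 x u hu v hv)
        rintro f ⟨g, ⟨z, e, he, rfl⟩, rfl⟩
        exact ⟨e ∩ classOf s'.r x, ⟨e, he, rfl⟩,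
          fun w hw => ⟨hw.1.1, hw.2⟩⟩
      · -- quotient condition
        intro a
        induction a using Quotient.ind with
        | _ x =>
          intro b hb c hc
          rw [classOf_rbar hr hle x] at hb hc
          obtain ⟨u, hu, rfl⟩ := hb
          obtain ⟨v, hv, rfl⟩ := hc
          exact ascend hr hle (h3 x u hu v hv)
  · rintro -
    ext f
    constructor
    · rintro ⟨a, hf⟩
      induction a using Quotient.ind with
      | _ x =>
        obtain ⟨g, ⟨e, he, rfl⟩, rfl⟩ := hf
        refine ⟨e ∩ classOf r x, ⟨x, e, he, rfl⟩, ?_⟩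
        rw [classOf_rbar hr hle x, image_inter_class hr hle e x]
    · rintro ⟨g, ⟨x, e, he, rfl⟩, rfl⟩
      exact ⟨Quotient.mk s' x, Quotient.mk s' '' e, ⟨e, he, rfl⟩,
        by rw [classOf_rbar hr hle x, image_inter_class hr hle e x]⟩
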